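/- For each fixed integer r ≥ 0, lim_{m→∞} ∑_{k=r}^{m} C(m,k) C(k,r) ((-1)^{k+r}/k!) ∫₀^∞ x^k e^{-x}/(x+1) dx = 0. -/

import Mathlib

/-!
Write `A k = ∫₀^∞ xᵏ e⁻ˣ/(x+1) dx`. Both `A k` and `k! ∫₀^∞ e⁻ᵗ (1+t)^-(k+1) dt` satisfy
`u (k+1) = k! - u k` (for the second, by integration by parts) with the same value at `k = 0`,
so they agree. Substituting, the sum becomes `∫₀^∞ e⁻ᵗ s b_{m,r}(s) dt` with `s = 1/(1+t)`, where
`b_{m,r}(s) = C(m,r) sʳ (1-s)^(m-r)` is the Bernstein basis polynomial, whose expansion in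
monomials is `∑ₖ C(m,k) C(k,r) (-1)^(k+r) sᵏ`.
On `[0,1]` we have `0 ≤ b_{m,r} ≤ 1`, and `b_{m,r}(s) → 0` as `m → ∞` for `0 < s < 1`, so dominated
convergence (with dominating function `e⁻ᵗ`) gives the limit `0`.
-/

open MeasureTheory Real Filter Set Topology Polynomial
open scoped Nat

theorem bernsteinPolynomial_eq_sum_Icc {R : Type*} [CommRing R] (m r : ℕ) :
    bernsteinPolynomial R m r =
      ∑ k ∈ Finset.Icc r m, (m.choose k * k.choose r * (-1) ^ (k + r) : R[X]) * X ^ k := by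
  rcases lt_or_ge m r with hmr | hrm
  · rw [bernsteinPolynomial.eq_zero_of_lt R hmr, Finset.Icc_eq_empty_of_lt hmr, Finset.sum_empty]
  rw [bernsteinPolynomial, sub_eq_neg_add, add_pow, Finset.mul_sum,
    ← Finset.Ico_add_one_right_eq_Icc, Finset.sum_Ico_eq_sum_range,
    show m + 1 - r = m - r + 1 by omega]
  refine Finset.sum_congr rfl fun j hj => ?_
  have hchoose : (m.choose (r + j) * (r + j).choose r : R[X]) = m.choose r * (m - r).choose j := by
    rw [← Nat.cast_mul, ← Nat.cast_mul, Nat.choose_mul (by simp at hj; omega),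
      Nat.add_sub_cancel_left]
  rw [hchoose, show r + j + r = j + 2 * r by ring, pow_add, pow_mul, neg_pow]
  simp only [one_pow, mul_one, even_two, Even.neg_pow]
  ring

theorem bernsteinPolynomial_eval_nonneg {m r : ℕ} {s : ℝ} (h0 : 0 ≤ s) (h1 : s ≤ 1) :
    0 ≤ (bernsteinPolynomial ℝ m r).eval s := by
  simp only [bernsteinPolynomial, eval_mul, eval_pow, eval_sub, eval_one, eval_X, eval_natCast]
  have : 0 ≤ 1 - s := by linarith
  positivity

theorem bernsteinPolynomial_eval_le_one {m r : ℕ} {s : ℝ} (h0 : 0 ≤ s) (h1 : s ≤ 1) :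
    (bernsteinPolynomial ℝ m r).eval s ≤ 1 := by
  rcases lt_or_ge m r with hmr | hrm
  · simp [bernsteinPolynomial.eq_zero_of_lt ℝ hmr]
  calc (bernsteinPolynomial ℝ m r).eval s
      ≤ ∑ ν ∈ Finset.range (m + 1), (bernsteinPolynomial ℝ m ν).eval s :=
        Finset.single_le_sum (f := fun ν => (bernsteinPolynomial ℝ m ν).eval s)
          (fun _ _ => bernsteinPolynomial_eval_nonneg h0 h1)
          (Finset.mem_range.2 (Nat.lt_succ_of_le hrm))
    _ = 1 := by rw [← eval_finsetSum, bernsteinPolynomial.sum, eval_one]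

theorem tendsto_bernsteinPolynomial_eval_atTop (r : ℕ) {s : ℝ} (h0 : 0 < s) (h1 : s < 1) :
    Tendsto (fun m => (bernsteinPolynomial ℝ m r).eval s) atTop (𝓝 0) := by
  have hq0 : 0 < 1 - s := by linarith
  have hlim := (tendsto_pow_const_mul_const_pow_of_lt_one r hq0.le
    (by linarith : 1 - s < 1)).const_mul ((s / (1 - s)) ^ r)
  rw [mul_zero] at hlim
  refine squeeze_zero' (Eventually.of_forall fun m => bernsteinPolynomial_eval_nonneg h0.le h1.le)
    ?_ hlim
  filter_upwards [eventually_ge_atTop r] with m hrm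
  have hpow : (1 - s) ^ m = (1 - s) ^ r * (1 - s) ^ (m - r) := by rw [← pow_add]; congr 1; omega
  simp only [bernsteinPolynomial, eval_mul, eval_pow, eval_sub, eval_one, eval_X, eval_natCast]
  rw [hpow, div_pow]
  field_simp
  exact_mod_cast Nat.choose_le_pow m r

theorem integrableOn_pow_mul_exp_neg_Ioi (k : ℕ) :
    IntegrableOn (fun x : ℝ => x ^ k * exp (-x)) (Ioi 0) :=
  (GammaIntegral_convergent (s := k + 1) (by positivity)).congr_fun
    (fun x _ => by dsimp only; rw [add_sub_cancel_right, rpow_natCast, mul_comm]) measurableSet_Ioi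

theorem integral_pow_mul_exp_neg_Ioi (k : ℕ) : ∫ x in Ioi (0 : ℝ), x ^ k * exp (-x) = k ! := by
  rw [← Gamma_nat_eq_factorial, Gamma_eq_integral (by positivity)]
  refine setIntegral_congr_fun measurableSet_Ioi fun x _ => ?_
  rw [add_sub_cancel_right, rpow_natCast, mul_comm]

theorem integrableOn_pow_mul_exp_neg_div_add_one (k : ℕ) :
    IntegrableOn (fun x : ℝ => x ^ k * exp (-x) / (x + 1)) (Ioi 0) := by
  refine (integrableOn_pow_mul_exp_neg_Ioi k).mono'
    (by fun_prop : Measurable _).aestronglyMeasurable ?_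
  filter_upwards [self_mem_ae_restrict measurableSet_Ioi] with x (hx : 0 < x)
  rw [norm_of_nonneg (by positivity)]
  exact div_le_self (by positivity) (by linarith)

theorem integrableOn_exp_neg_div_one_add_pow (k : ℕ) :
    IntegrableOn (fun t : ℝ => exp (-t) / (1 + t) ^ k) (Ioi 0) := by
  refine (integrableOn_exp_neg_Ioi 0).mono' (by fun_prop : Measurable _).aestronglyMeasurable ?_
  filter_upwards [self_mem_ae_restrict measurableSet_Ioi] with t (ht : 0 < t)
  rw [norm_of_nonneg (by positivity)]
  exact div_le_self (exp_pos _).le (one_le_pow₀ (by linarith))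

theorem integral_exp_neg_div_one_add_pow_add_succ_mul (k : ℕ) :
    (∫ t in Ioi (0 : ℝ), exp (-t) / (1 + t) ^ (k + 1)) +
      (k + 1) * ∫ t in Ioi (0 : ℝ), exp (-t) / (1 + t) ^ (k + 2) = 1 := by
  have hderiv : ∀ t ∈ Ici (0 : ℝ), HasDerivAt (fun t => -exp (-t) / (1 + t) ^ (k + 1))
      (exp (-t) / (1 + t) ^ (k + 1) + (k + 1) * (exp (-t) / (1 + t) ^ (k + 2))) t := by
    intro t (ht : 0 ≤ t)
    refine ((hasDerivAt_neg t).exp.fun_neg.fun_div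
      (((hasDerivAt_id' t).const_add 1).fun_pow (k + 1)) (by positivity)).congr_deriv ?_
    rw [Nat.add_sub_cancel, Nat.cast_succ]
    field_simp
    ring
  have hlim : Tendsto (fun t : ℝ => -exp (-t) / (1 + t) ^ (k + 1)) atTop (𝓝 0) := by
    refine squeeze_zero_norm' ?_ tendsto_exp_neg_atTop_nhds_zero
    filter_upwards [eventually_ge_atTop 0] with t ht
    rw [norm_div, norm_neg, norm_of_nonneg (exp_pos _).le, norm_of_nonneg (by positivity)]
    exact div_le_self (exp_pos _).le (one_le_pow₀ (by linarith))
  have h := integral_Ioi_of_hasDerivAt_of_tendsto' hderiv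
    ((integrableOn_exp_neg_div_one_add_pow _).add
      ((integrableOn_exp_neg_div_one_add_pow _).const_mul _)) hlim
  rw [integral_add (integrableOn_exp_neg_div_one_add_pow _)
    ((integrableOn_exp_neg_div_one_add_pow _).const_mul _), integral_const_mul] at h
  simpa using h

theorem integral_pow_succ_mul_exp_neg_div_add_one_add (k : ℕ) :
    (∫ x in Ioi (0 : ℝ), x ^ (k + 1) * exp (-x) / (x + 1)) +
      ∫ x in Ioi (0 : ℝ), x ^ k * exp (-x) / (x + 1) = k ! := by
  rw [← integral_add (integrableOn_pow_mul_exp_neg_div_add_one _)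
    (integrableOn_pow_mul_exp_neg_div_add_one _), ← integral_pow_mul_exp_neg_Ioi]
  refine setIntegral_congr_fun measurableSet_Ioi fun x (hx : 0 < x) => ?_
  field_simp
  ring

theorem integral_pow_mul_exp_neg_div_add_one (k : ℕ) :
    ∫ x in Ioi (0 : ℝ), x ^ k * exp (-x) / (x + 1) =
      k ! * ∫ t in Ioi (0 : ℝ), exp (-t) / (1 + t) ^ (k + 1) := by
  induction k with
  | zero =>
    rw [Nat.factorial_zero, Nat.cast_one, one_mul]
    refine setIntegral_congr_fun measurableSet_Ioi fun x _ => ?_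
    simp [add_comm]
  | succ k ih =>
    have hA := integral_pow_succ_mul_exp_neg_div_add_one_add k
    have hB := integral_exp_neg_div_one_add_pow_add_succ_mul k
    rw [Nat.factorial_succ, Nat.cast_mul]
    push_cast at hB ⊢
    linear_combination hA - ih - (k ! : ℝ) * hB

theorem sum_Icc_mul_integral_eq_integral_bernsteinPolynomial (r m : ℕ) :
    ∑ k ∈ Finset.Icc r m, (m.choose k : ℝ) * k.choose r * ((-1) ^ (k + r) / k !) *
        ∫ x in Ioi (0 : ℝ), x ^ k * exp (-x) / (x + 1) =
      ∫ t in Ioi (0 : ℝ), exp (-t) * (1 + t)⁻¹ * (bernsteinPolynomial ℝ m r).eval (1 + t)⁻¹ := by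
  have hterm : ∀ k, (m.choose k : ℝ) * k.choose r * ((-1) ^ (k + r) / k !) *
        ∫ x in Ioi (0 : ℝ), x ^ k * exp (-x) / (x + 1) =
      ∫ t in Ioi (0 : ℝ), (m.choose k * k.choose r * (-1) ^ (k + r) : ℝ) *
        (exp (-t) / (1 + t) ^ (k + 1)) := by
    intro k
    rw [integral_pow_mul_exp_neg_div_add_one, integral_const_mul]
    field_simp
  rw [Finset.sum_congr rfl fun k _ => hterm k, ← integral_finsetSum _ fun k _ =>
    (integrableOn_exp_neg_div_one_add_pow _).const_mul _]
  refine setIntegral_congr_fun measurableSet_Ioi fun t (ht : 0 < t) => ?_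
  rw [bernsteinPolynomial_eq_sum_Icc, eval_finsetSum, Finset.mul_sum]
  refine Finset.sum_congr rfl fun k _ => ?_
  simp only [eval_mul, eval_pow, eval_X, eval_natCast, eval_neg, eval_one, inv_pow]
  field_simp
  ring

theorem tendsto_integral_exp_neg_mul_bernsteinPolynomial (r : ℕ) :
    Tendsto (fun m : ℕ => ∫ t in Ioi (0 : ℝ),
      exp (-t) * (1 + t)⁻¹ * (bernsteinPolynomial ℝ m r).eval (1 + t)⁻¹) atTop (𝓝 0) := by
  have hs : ∀ t ∈ Ioi (0 : ℝ), 0 < (1 + t)⁻¹ ∧ (1 + t)⁻¹ < 1 := fun t (ht : 0 < t) =>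
    ⟨by positivity, inv_lt_one_of_one_lt₀ (by linarith)⟩
  have h := tendsto_integral_filter_of_dominated_convergence (fun t => exp (-t)) (l := atTop)
    (F := fun m t => exp (-t) * (1 + t)⁻¹ * (bernsteinPolynomial ℝ m r).eval (1 + t)⁻¹) (f := 0)
    (Eventually.of_forall fun m => (by fun_prop : Measurable _).aestronglyMeasurable) ?_
    (integrableOn_exp_neg_Ioi 0) ?_
  · simpa using h
  · refine Eventually.of_forall fun m => ?_
    filter_upwards [self_mem_ae_restrict measurableSet_Ioi] with t ht
    obtain ⟨hs0, hs1⟩ := hs t ht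
    have hb0 := bernsteinPolynomial_eval_nonneg (m := m) (r := r) hs0.le hs1.le
    rw [norm_of_nonneg (by positivity)]
    calc exp (-t) * (1 + t)⁻¹ * (bernsteinPolynomial ℝ m r).eval (1 + t)⁻¹
        ≤ exp (-t) * 1 * 1 := by
          gcongr
          exact bernsteinPolynomial_eval_le_one hs0.le hs1.le
      _ = exp (-t) := by ring
  · filter_upwards [self_mem_ae_restrict measurableSet_Ioi] with t ht
    obtain ⟨hs0, hs1⟩ := hs t ht
    simpa using
      (tendsto_bernsteinPolynomial_eval_atTop r hs0 hs1).const_mul (exp (-t) * (1 + t)⁻¹)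

theorem stmt17 (r : ℕ) :
    Tendsto
      (fun m : ℕ =>
        ∑ k ∈ Finset.Icc r m,
          (m.choose k : ℝ) * (k.choose r : ℝ) * ((-1 : ℝ) ^ (k + r) / (Nat.factorial k : ℝ)) *
            ∫ x in Set.Ioi (0:ℝ), x ^ k * Real.exp (-x) / (x + 1))
      atTop (nhds 0) := by
  simpa only [sum_Icc_mul_integral_eq_integral_bernsteinPolynomial] using
    tendsto_integral_exp_neg_mul_bernsteinPolynomial r
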